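/- arXiv:0906.5345 — 4 statements merged into one kernel-verified Lean document; each statement's English description precedes it below -/
import Mathlib

section
/- Let A and B be groups with A nontrivial and B having at least three elements. Then the free product A ∗ B is an ICC group: for every g ∈ A ∗ B with g ≠ 1, the conjugacy class {h g h⁻¹ : h ∈ A ∗ B} is infinite. -/
open MeasureTheory

/-- A group is ICC if every nonidentity element has an infinite conjugacy class. -/
def IsICCGroup (G : Type*) [Group G] : Prop :=
  ∀ g : G, g ≠ 1 → (Set.range fun h : G => h * g * h⁻¹).Infinite

/-!
Write `g ≠ 1` as a reduced word `w`. If `w` begins and ends in the same factor, pick a reduced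
word `t` of length two beginning in that factor and ending in the other one: then
`tⁿ w t⁻ⁿ` is again reduced, of length growing with `n`, so these conjugates are pairwise
distinct. If `w` begins in `B` and ends in `A`, conjugating by a letter `u ∈ B` with `u ≠ 1`
and `u ≠ (first letter of w)⁻¹` (this is where `B` needs three elements) gives a reduced word
beginning and ending in `B`. A word beginning in `A` and ending in `B` is treated through
its inverse.
-/

open Monoid Pointwise

section Conjugates

variable {G H : Type*} [Group G] [Group H]

theorem isICCGroup_iff_conjugatesOf :
    IsICCGroup G ↔ ∀ g : G, g ≠ 1 → (conjugatesOf g).Infinite := by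
  have h (g : G) : (Set.range fun h : G => h * g * h⁻¹) = conjugatesOf g := by
    ext b; simp [conjugatesOf]
  simp only [IsICCGroup, h]

theorem conjugatesOf_inv (g : G) : conjugatesOf g⁻¹ = (conjugatesOf g)⁻¹ := by
  ext b
  change IsConj _ _ ↔ IsConj _ _
  simp only [isConj_iff, ← conj_inv, inv_eq_iff_eq_inv]

theorem MulEquiv.image_conjugatesOf (e : G ≃* H) (g : G) :
    e '' conjugatesOf g = conjugatesOf (e g) := by
  ext b
  refine ⟨?_, fun hb => ⟨e.symm b, ?_, e.apply_symm_apply b⟩⟩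
  · rintro ⟨a, ha, rfl⟩
    exact e.toMonoidHom.map_isConj ha
  · show IsConj g (e.symm b)
    simpa only [MulEquiv.coe_toMonoidHom, MulEquiv.symm_apply_apply] using
      e.symm.toMonoidHom.map_isConj hb

theorem IsICCGroup.of_mulEquiv (e : G ≃* H) (hG : IsICCGroup G) : IsICCGroup H := by
  rw [isICCGroup_iff_conjugatesOf] at hG ⊢
  intro h hh
  rw [← e.apply_symm_apply h, ← e.image_conjugatesOf]
  exact (hG _ (by simpa using hh)).image e.injective.injOn

end Conjugates

theorem exists_ne_and_ne_of_three {α : Type*} (h : ∃ x y z : α, x ≠ y ∧ x ≠ z ∧ y ≠ z)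
    (a b : α) : ∃ u, u ≠ a ∧ u ≠ b := by
  obtain ⟨x, y, z, hxy, hxz, hyz⟩ := h
  by_contra! hab
  have key (u : α) : u = a ∨ u = b := (eq_or_ne u a).imp_right (hab u)
  grind [key x, key y, key z]

def Monoid.coprodMulEquivCoprodI (M : Bool → Type*) [∀ b, Monoid (M b)] :
    Coprod (M true) (M false) ≃* CoprodI M :=
  MonoidHom.toMulEquiv (Coprod.lift CoprodI.of CoprodI.of)
    (CoprodI.lift fun b => match b with | true => Coprod.inl | false => Coprod.inr)
    (Coprod.hom_ext (by ext; simp) (by ext; simp))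
    (CoprodI.ext_hom _ _ fun b => by cases b <;> ext <;> simp)

namespace Monoid.CoprodI.NeWord

variable {ι : Type*}

section Monoid

variable {M : ι → Type*} [∀ i, Monoid (M i)]

def powSucc {i j : ι} (w : NeWord M i j) (hji : j ≠ i) : ℕ → NeWord M i j
  | 0 => w
  | n + 1 => w.append hji (w.powSucc hji n)

theorem length_toList_powSucc {i j : ι} (w : NeWord M i j) (hji : j ≠ i) (n : ℕ) :
    (w.powSucc hji n).toList.length = (n + 1) * w.toList.length := by
  induction n with
  | zero => simp [powSucc]
  | succ n ih =>
    simp only [powSucc, toList, List.length_append, ih]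
    ring

theorem length_toList_eq_of_prod_eq {i j k l : ι} {w₁ : NeWord M i j} {w₂ : NeWord M k l}
    (h : w₁.prod = w₂.prod) : w₁.toList.length = w₂.toList.length := by
  classical
  have : w₁.toWord = w₂.toWord := Word.equiv.symm.injective h
  exact congrArg (fun w : Word M => w.toList.length) this

theorem exists_prod_eq {g : CoprodI M} (hg : g ≠ 1) :
    ∃ (i j : ι) (w : NeWord M i j), w.prod = g := by
  classical
  have hw : Word.equiv g ≠ Word.empty := fun h => hg (by
    rw [← Word.equiv.symm_apply_apply g, h]; exact Word.prod_empty)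
  obtain ⟨i, j, w, hw⟩ := of_word _ hw
  exact ⟨i, j, w, by rw [prod, hw]; exact Word.equiv.symm_apply_apply g⟩

end Monoid

variable {G : ι → Type*} [∀ i, Group (G i)]

theorem length_toList_inv {i j : ι} (w : NeWord G i j) :
    w.inv.toList.length = w.toList.length := by
  induction w with
  | singleton => rfl
  | append w₁ _ w₂ ih₁ ih₂ =>
    simp only [inv, toList, List.length_append, ih₁, ih₂]
    omega

theorem infinite_conjugatesOf_prod {i j : ι} (t : NeWord G i j) (hij : i ≠ j)
    (w : NeWord G i i) : (conjugatesOf w.prod).Infinite := by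
  let c (n : ℕ) : NeWord G i j := t.powSucc hij.symm n
  let v (n : ℕ) : NeWord G i i := ((c n).append hij.symm w).append hij (c n).inv
  have hlen (n : ℕ) :
      (v n).toList.length = w.toList.length + 2 * (n + 1) * t.toList.length := by
    simp only [v, c, toList, List.length_append, length_toList_inv, length_toList_powSucc]
    ring
  have ht : 0 < t.toList.length := List.length_pos_of_ne_nil t.toList_ne_nil
  refine Set.infinite_of_injective_forall_mem (f := fun n => (v n).prod)
    (fun n m hnm => ?_) fun n => ?_
  · have := length_toList_eq_of_prod_eq hnm
    rw [hlen, hlen] at this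
    have := Nat.eq_of_mul_eq_mul_right ht (Nat.add_left_cancel this)
    omega
  · exact isConj_iff.mpr ⟨(c n).prod, by simp [v, append_prod, inv_prod, mul_assoc]⟩

theorem exists_isConj_prod_of_ne {i j : ι} (w : NeWord G i j) (hij : i ≠ j) {u : G i}
    (hu : u ≠ 1) (huw : u * w.head ≠ 1) : ∃ v : NeWord G i i, IsConj w.prod v.prod :=
  ⟨(w.mulHead u huw).append hij.symm (singleton u⁻¹ (inv_ne_one.mpr hu)),
    isConj_iff.mpr ⟨CoprodI.of u, by simp [append_prod, mulHead_prod, mul_assoc]⟩⟩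

end Monoid.CoprodI.NeWord

namespace Monoid.CoprodI

open NeWord

theorem isICCGroup_bool {G : Bool → Type*} [∀ b, Group (G b)] [Nontrivial (G true)]
    (h3 : ∃ x y z : G false, x ≠ y ∧ x ≠ z ∧ y ≠ z) : IsICCGroup (CoprodI G) := by
  obtain ⟨a, ha⟩ := exists_ne (1 : G true)
  obtain ⟨b, hb, -⟩ := exists_ne_and_ne_of_three h3 1 1
  have same_ends {i : Bool} (w : NeWord G i i) : (conjugatesOf w.prod).Infinite := by
    cases i
    · exact infinite_conjugatesOf_prod ((singleton b hb).append (by decide) (singleton a ha))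
        (by decide) w
    · exact infinite_conjugatesOf_prod ((singleton a ha).append (by decide) (singleton b hb))
        (by decide) w
  have mixed (w : NeWord G false true) : (conjugatesOf w.prod).Infinite := by
    obtain ⟨u, hu, huw⟩ := exists_ne_and_ne_of_three h3 1 w.head⁻¹
    obtain ⟨v, hv⟩ := exists_isConj_prod_of_ne w (by decide) hu
      (fun h => huw (eq_inv_of_mul_eq_one_left h))
    exact hv.conjugatesOf_eq ▸ same_ends v
  rw [isICCGroup_iff_conjugatesOf]
  intro g hg
  obtain ⟨i, j, w, rfl⟩ := exists_prod_eq hg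
  cases i <;> cases j
  · exact same_ends w
  · exact mixed w
  · have := mixed w.inv
    rwa [inv_prod, conjugatesOf_inv, Set.infinite_inv] at this
  · exact same_ends w

end Monoid.CoprodI

universe u

instance Bool.condGroup (G H : Type u) [Group G] [Group H] : ∀ b, Group (cond b G H)
  | true => ‹Group G›
  | false => ‹Group H›

theorem Monoid.Coprod.isICCGroup {G H : Type u} [Group G] [Group H] [Nontrivial G]
    (hH : ∃ x y z : H, x ≠ y ∧ x ≠ z ∧ y ≠ z) : IsICCGroup (Coprod G H) :=
  have : Nontrivial (cond true G H) := ‹Nontrivial G›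
  (CoprodI.isICCGroup_bool (G := fun b => cond b G H) hH).of_mulEquiv
    (coprodMulEquivCoprodI _).symm

/-- If `A` is nontrivial and `B` has at least three elements, then the free product
`A ∗ B` is an ICC group. -/
theorem freeProd_isICC (A B : Type*) [Group A] [Group B] [Nontrivial A]
    (hB : ∃ x y z : B, x ≠ y ∧ x ≠ z ∧ y ≠ z) :
    IsICCGroup (Monoid.Coprod A B) := by
  have hB' : ∃ x y z : ULift.{u_1} B, x ≠ y ∧ x ≠ z ∧ y ≠ z := by
    obtain ⟨x, y, z, h⟩ := hB
    exact ⟨.up x, .up y, .up z, by simpa using h⟩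
  exact (Coprod.isICCGroup (G := ULift A) hB').of_mulEquiv
    (MulEquiv.coprodCongr MulEquiv.ulift MulEquiv.ulift)
end

section
/- For every group G, the group (G × F₂) ∗ ℤ is ICC: for every g ≠ 1 in (G × F₂) ∗ ℤ, the conjugacy class {h g h⁻¹ : h ∈ (G × F₂) ∗ ℤ} is infinite. In particular, the assignment G ↦ (G × F₂) ∗ ℤ produces ICC groups from arbitrary groups. -/
open MeasureTheory

/-!
If `x` has only finitely many conjugates, the conjugates `tⁿ x t⁻ⁿ` repeat, so some nonzero power
of `t` commutes with `x`. In a free product, an element commuting with a nontrivial element of a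
factor lies in that factor: otherwise, writing it in normal form, the commutation relation
identifies two reduced words starting in different factors. Taking `t` of infinite order in
`G × F₂` and `s` a generator of `ℤ`, an element with finite conjugacy class lies in both
factors, hence is trivial.
-/

theorem exists_zpow_commute_of_finite_conj {K : Type*} [Group K] {x : K}
    (hx : (Set.range fun h : K => h * x * h⁻¹).Finite) (t : K) :
    ∃ n : ℤ, n ≠ 0 ∧ Commute (t ^ n) x := by
  have hmaps : Set.MapsTo (fun n : ℤ => t ^ n * x * (t ^ n)⁻¹) Set.univ
      (Set.range fun h : K => h * x * h⁻¹) := fun n _ => ⟨t ^ n, rfl⟩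
  obtain ⟨a, -, b, -, hab, heq⟩ := Set.infinite_univ.exists_ne_map_eq_of_mapsTo hmaps hx
  refine ⟨-b + a, by omega, ?_⟩
  rw [zpow_add, zpow_neg]
  calc (t ^ b)⁻¹ * t ^ a * x
      = (t ^ b)⁻¹ * (t ^ a * x * (t ^ a)⁻¹) * t ^ a := by group
    _ = x * ((t ^ b)⁻¹ * t ^ a) := by rw [heq]; group

theorem IsICCGroup.of_mulEquiv_s3 {K L : Type*} [Group K] [Group L] (e : K ≃* L)
    (hK : IsICCGroup K) : IsICCGroup L := by
  intro x hx
  have hconj : e '' (Set.range fun h => h * e.symm x * h⁻¹) =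
      Set.range fun h => h * x * h⁻¹ := by
    rw [← Set.range_comp, ← e.surjective.range_comp fun h => h * x * h⁻¹]
    congr 1 with h
    simp
  exact hconj ▸ (hK _ (by simpa using hx)).image e.injective.injOn

namespace Monoid.CoprodI

namespace NeWord

variable {ι : Type*} {M : ι → Type*} [∀ i, Monoid (M i)]

theorem fst_eq_of_prod_eq {i j k l : ι} (w : NeWord M i j) (w' : NeWord M k l)
    (h : w.prod = w'.prod) : i = k := by
  classical
  have hword : w.toWord = w'.toWord := Word.equiv.symm.injective h
  have hhead := congrArg (fun v : Word M => v.toList.head?) hword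
  simp only [toWord, toList_head?, Option.some.injEq] at hhead
  exact congrArg Sigma.fst hhead

theorem prod_eq_of_head_or_eq_of_head_mul {i j : ι} (w : NeWord M i j) :
    (∃ _ : i = j, w.prod = of w.head) ∨
      ∃ k, ∃ (_ : i ≠ k) (w' : NeWord M k j), w.prod = of w.head * w'.prod := by
  induction w with
  | singleton => exact Or.inl ⟨rfl, by simp⟩
  | @append _ _ c _ w₁ hne w₂ ih₁ =>
    rcases ih₁ with ⟨rfl, h⟩ | ⟨k, hk, w', h⟩
    · exact Or.inr ⟨c, hne, w₂, by simp [h]⟩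
    · exact Or.inr ⟨k, hk, append w' hne w₂, by simp [h, mul_assoc]⟩

theorem prod_eq_of_or_eq_of_mul_prod (i : ι) {a b : ι} (w : NeWord M a b) :
    (∃ h : M i, w.prod = of h) ∨
      ∃ a' ≠ i, ∃ (w' : NeWord M a' b) (h : M i), w.prod = of h * w'.prod := by
  by_cases ha : a = i
  · subst ha
    rcases w.prod_eq_of_head_or_eq_of_head_mul with ⟨-, h⟩ | ⟨k, hk, w', h⟩
    · exact Or.inl ⟨_, h⟩
    · exact Or.inr ⟨k, hk.symm, w', _, h⟩
  · exact Or.inr ⟨a, ha, w, 1, by simp⟩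

variable {G : ι → Type*} [∀ i, Group (G i)]

theorem prod_eq_of_or_eq_prod_mul_of (i : ι) {a b : ι} (w : NeWord G a b) :
    (∃ h : G i, w.prod = of h) ∨
      ∃ b' ≠ i, ∃ (w' : NeWord G a b') (h : G i), w.prod = w'.prod * of h := by
  rw [← inv_inv w.prod, ← inv_prod]
  rcases w.inv.prod_eq_of_or_eq_of_mul_prod i with ⟨h, hw⟩ | ⟨b', hb', w', h, hw⟩
  · exact Or.inl ⟨h⁻¹, by simp [hw]⟩
  · exact Or.inr ⟨b', hb', w'.inv, h⁻¹, by simp [hw]⟩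

end NeWord

variable {ι : Type*} {G : ι → Type*} [∀ i, Group (G i)]

theorem exists_eq_of_mul_prod_mul_of {i : ι} {x : CoprodI G}
    (hx : x ∉ (of : G i →* CoprodI G).range) :
    ∃ a ≠ i, ∃ b ≠ i, ∃ (w : NeWord G a b) (h k : G i), x = of h * w.prod * of k := by
  classical
  have hword : Word.equiv x ≠ Word.empty := fun h ↦
    hx ⟨1, by rw [map_one, ← Word.equiv.symm_apply_apply x, h]; rfl⟩
  obtain ⟨a, b, w, hw⟩ := NeWord.of_word _ hword
  have hxw : x = w.prod := by rw [NeWord.prod, hw]; exact (Word.equiv.symm_apply_apply x).symm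
  rcases w.prod_eq_of_or_eq_of_mul_prod i with ⟨h, hh⟩ | ⟨a', ha', w', h, hh⟩
  · exact absurd ⟨h, (hxw.trans hh).symm⟩ hx
  rcases w'.prod_eq_of_or_eq_prod_mul_of i with ⟨k, hk⟩ | ⟨b', hb', w'', k, hk⟩
  · exact absurd ⟨h * k, by rw [hxw, hh, hk, map_mul]⟩ hx
  · exact ⟨a', ha', b', hb', w'', h, k, by rw [hxw, hh, hk, mul_assoc]⟩

theorem mem_range_of_of_commute {i : ι} {m : G i} (hm : m ≠ 1) {x : CoprodI G}
    (hx : Commute (of m) x) : x ∈ (of : G i →* CoprodI G).range := by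
  by_contra hxi
  obtain ⟨a, ha, b, hb, w, h, k, rfl⟩ := exists_eq_of_mul_prod_mul_of hxi
  have hm₁ : h⁻¹ * m * h ≠ 1 := by simpa [mul_assoc, inv_mul_eq_one] using hm
  have hm₂ : k * m * k⁻¹ ≠ 1 := by simpa [mul_inv_eq_one] using hm
  have hconj : of (h⁻¹ * m * h) * w.prod = w.prod * of (k * m * k⁻¹) := by
    simp only [map_mul, map_inv]
    calc (of h)⁻¹ * of m * of h * w.prod
        = (of h)⁻¹ * (of m * (of h * w.prod * of k)) * (of k)⁻¹ := by group
      _ = w.prod * (of k * of m * (of k)⁻¹) := by rw [hx.eq]; group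
  -- both sides of `hconj` are reduced words, starting in `G i` and in `G a` respectively
  have := NeWord.fst_eq_of_prod_eq (.append (.singleton _ hm₁) ha.symm w)
    (.append w hb (.singleton _ hm₂)) (by simpa using hconj)
  exact ha this.symm

theorem eq_one_of_of_eq_of {i j : ι} (hij : i ≠ j) {x : G i} {y : G j}
    (h : (of x : CoprodI G) = of y) : x = 1 := by
  by_contra hx
  by_cases hy : y = 1
  · exact hx (of_injective i (by rw [h, hy, map_one, map_one]))
  · exact hij (NeWord.fst_eq_of_prod_eq (.singleton x hx) (.singleton y hy) (by simpa using h))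

theorem isICCGroup_of_not_isOfFinOrder {i j : ι} (hij : i ≠ j) {t : G i} {s : G j}
    (ht : ¬IsOfFinOrder t) (hs : ¬IsOfFinOrder s) : IsICCGroup (CoprodI G) := by
  intro x hx
  by_contra hfin
  have mem_range {k : ι} {u : G k} (hu : ¬IsOfFinOrder u) : x ∈ (of : G k →* _).range := by
    obtain ⟨n, hn, hcomm⟩ := exists_zpow_commute_of_finite_conj (Set.not_infinite.1 hfin) (of u)
    rw [← map_zpow] at hcomm
    exact mem_range_of_of_commute (fun h => hu (isOfFinOrder_iff_zpow_eq_one.2 ⟨n, hn, h⟩)) hcomm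
  obtain ⟨y, rfl⟩ := mem_range ht
  obtain ⟨z, hz⟩ := mem_range hs
  exact hx (by rw [eq_one_of_of_eq_of hij hz.symm, map_one])

end Monoid.CoprodI

namespace Monoid.Coprod

universe u v

instance instGroupCond {A B : Type u} [Group A] [Group B] : ∀ b : Bool, Group (cond b A B)
  | true => ‹_›
  | false => ‹_›

def mulEquivCoprodI (A B : Type u) [Group A] [Group B] :
    A ∗ B ≃* CoprodI (fun b : Bool => cond b A B) :=
  MonoidHom.toMulEquiv
    (lift (CoprodI.of (M := fun b : Bool => cond b A B) (i := true))
      (CoprodI.of (M := fun b : Bool => cond b A B) (i := false)))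
    (CoprodI.lift fun | true => inl | false => inr)
    (by ext <;> simp)
    (by ext (_ | _) <;> simp)

theorem isICCGroup_of_not_isOfFinOrder {A : Type u} {B : Type v} [Group A] [Group B]
    {a : A} {b : B} (ha : ¬IsOfFinOrder a) (hb : ¬IsOfFinOrder b) : IsICCGroup (A ∗ B) := by
  -- `CoprodI` needs a family of groups in a single universe
  let e := (MulEquiv.coprodCongr MulEquiv.ulift.symm MulEquiv.ulift.symm).trans
    (mulEquivCoprodI (ULift.{v} A) (ULift.{u} B))
  have ha' : ¬IsOfFinOrder (ULift.up.{v} a) :=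
    orderOf_eq_zero_iff.1 ((MulEquiv.ulift.symm.orderOf_eq a).trans (orderOf_eq_zero_iff.2 ha))
  have hb' : ¬IsOfFinOrder (ULift.up.{u} b) :=
    orderOf_eq_zero_iff.1 ((MulEquiv.ulift.symm.orderOf_eq b).trans (orderOf_eq_zero_iff.2 hb))
  exact IsICCGroup.of_mulEquiv_s3 e.symm
    (CoprodI.isICCGroup_of_not_isOfFinOrder (i := true) (j := false) (by decide) ha' hb')

end Monoid.Coprod

/-- For every group `G`, the free product `(G × F₂) ∗ ℤ` is an ICC group. -/
theorem prodFreeGroupCoprodInt_isICC (G : Type*) [Group G] :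
    IsICCGroup (Monoid.Coprod (G × FreeGroup (Fin 2)) (Multiplicative ℤ)) := by
  have hFree : ¬IsOfFinOrder ((1 : G), FreeGroup.of (0 : Fin 2)) := fun h =>
    not_isOfFinOrder_of_isMulTorsionFree (FreeGroup.of_ne_one 0) h.snd
  have hInt : ¬IsOfFinOrder (Multiplicative.ofAdd (1 : ℤ)) :=
    not_isOfFinOrder_of_isMulTorsionFree (by simp)
  exact Monoid.Coprod.isICCGroup_of_not_isOfFinOrder hFree hInt
end

section
/- The groups S∞ (the group of finitary permutations of ℕ) and ℤ are orbit equivalent: there exist a standard Borel probability space (X, μ) and actions of S∞ and of ℤ on X by measure-preserving measurable bijections, each of which is essentially free (for every nonidentity group element g, the set {x ∈ X : g·x = x} is μ-null) and ergodic (every measurable set invariant under the action is μ-null or μ-conull), such that for μ-almost every x ∈ X the S∞-orbit of x equals the ℤ-orbit of x. -/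
open MeasureTheory

/-- The group of finitary permutations of ℕ. -/
def SInf : Subgroup (Equiv.Perm ℕ) where
  carrier := {σ | {n | σ n ≠ n}.Finite}
  one_mem' := by simp
  mul_mem' := by
    intro σ τ hσ hτ
    refine Set.Finite.subset ((hσ.preimage τ.injective.injOn).union hτ) ?_
    intro n hn
    by_contra h
    simp only [Set.mem_union, Set.mem_preimage, Set.mem_setOf_eq, not_or, not_not] at h
    refine hn ?_
    show σ (τ n) = n
    rw [h.2, ← h.2]
    exact h.1
  inv_mem' := by
    intro σ hσ
    have : {n | σ⁻¹ n ≠ n} = {n | σ n ≠ n} := by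
      ext n
      simp only [Set.mem_setOf_eq, ne_eq, Equiv.Perm.inv_eq_iff_eq]
      exact not_iff_not.mpr eq_comm
    show {n | σ⁻¹ n ≠ n}.Finite
    exact this ▸ hσ

/-- A p.m.p. action: every group element acts as a measure-preserving (measurable) map. -/
def IsPMPAction {G X : Type*} [Group G] [MeasurableSpace X]
    (μ : Measure X) (a : G →* Equiv.Perm X) : Prop :=
  ∀ g : G, MeasurePreserving (a g) μ μ

/-- Essential freeness of an action. -/
def IsFreeAction {G X : Type*} [Group G] [MeasurableSpace X]
    (μ : Measure X) (a : G →* Equiv.Perm X) : Prop :=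
  ∀ g : G, g ≠ 1 → μ {x | a g x = x} = 0

/-- Ergodicity of an action. -/
def IsErgodicAction {G X : Type*} [Group G] [MeasurableSpace X]
    (μ : Measure X) (a : G →* Equiv.Perm X) : Prop :=
  ∀ A : Set X, MeasurableSet A → (∀ g : G, a g ⁻¹' A = A) → μ A = 0 ∨ μ A = 1

/-- The orbit of a point under an action. -/
def orbitOf {G X : Type*} [Group G] (a : G →* Equiv.Perm X) (x : X) : Set X :=
  Set.range fun g => a g x

/-- Two groups are orbit equivalent if they admit free, ergodic, p.m.p. actions on a
common standard Borel probability space whose orbits agree almost everywhere. -/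
def AreOrbitEquivalent (G H : Type*) [Group G] [Group H] : Prop :=
  ∃ (X : Type) (mX : MeasurableSpace X) (μ : @Measure X mX),
    @StandardBorelSpace X mX ∧ @IsProbabilityMeasure X mX μ ∧
    ∃ (a : G →* Equiv.Perm X) (b : H →* Equiv.Perm X),
      IsPMPAction μ a ∧ IsFreeAction μ a ∧ IsErgodicAction μ a ∧
      IsPMPAction μ b ∧ IsFreeAction μ b ∧ IsErgodicAction μ b ∧
      ∀ᵐ x ∂μ, orbitOf a x = orbitOf b x

/-!
Take `X = ∏ₙ Fin (n + 2)` with its Haar measure, the uniform product measure, and call two points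
tail equivalent when they agree from some coordinate on. A measurable tail-invariant set is null or
conull: swapping two prefixes of the same length preserves the measure and the set, so the set meets
all cylinders of a given length in equal proportion and is independent of itself.

The `ℤ`-action is the odometer, adding one with carry in the mixed radix where digit `n` has weight
`(n + 1)!`. Its orbits are the tail classes, except on the two countable classes of `0` and of the
all-maximal point, and it has no periodic points since `n` digits take `(n + 1)!` values.

The first `n` digits of `x` encode the permutation `(x₀ 1)(x₁ 2)⋯(xₙ₋₁ n)` of `{0, …, n}`, and each
such permutation arises from exactly one prefix. A finitary permutation `σ` fixing everything above
`n` acts by replacing these digits with the code of `σ` times the encoded permutation. This action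
is free, and its orbits are exactly the tail classes.
-/

open Filter Topology
open scoped ENNReal Nat

namespace FactorialOdometer

abbrev Digits : Type := ∀ n : ℕ, Fin (n + 2)

abbrev Prefix (n : ℕ) : Type := ∀ k : Fin n, Fin (k + 2)

def take (n : ℕ) (x : Digits) : Prefix n := fun k => x k

def withPrefix (n : ℕ) (p : Prefix n) (x : Digits) : Digits :=
  fun k => if h : k < n then p ⟨k, h⟩ else x k

section Prefixes

variable {n n' : ℕ} {x y : Digits}

lemma take_eq_take_iff : take n x = take n y ↔ ∀ k < n, x k = y k :=
  ⟨fun h k hk => congrFun h ⟨k, hk⟩, fun h => funext fun k => h k k.2⟩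

lemma take_eq_take_of_le (h : take n' x = take n' y) (hn : n ≤ n') : take n x = take n y :=
  take_eq_take_iff.2 fun k hk => take_eq_take_iff.1 h k (hk.trans_le hn)

@[simp]
lemma take_withPrefix (p : Prefix n) (x : Digits) : take n (withPrefix n p x) = p := by
  funext k
  simp [take, withPrefix]

lemma withPrefix_apply_of_le (p : Prefix n) (x : Digits) {k : ℕ} (hk : n ≤ k) :
    withPrefix n p x k = x k :=
  dif_neg hk.not_gt

@[simp]
lemma withPrefix_take (x : Digits) : withPrefix n (take n x) x = x := by
  funext k
  by_cases hk : k < n <;> simp [withPrefix, take, hk]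

@[simp]
lemma withPrefix_withPrefix (p q : Prefix n) (x : Digits) :
    withPrefix n p (withPrefix n q x) = withPrefix n p x := by
  funext k
  by_cases hk : k < n <;> simp [withPrefix, hk]

lemma take_succ_eq_take_succ_iff :
    take (n + 1) x = take (n + 1) y ↔ take n x = take n y ∧ x n = y n := by
  simp only [take_eq_take_iff, Nat.lt_succ_iff_lt_or_eq, or_imp, forall_and, forall_eq]

lemma eq_of_take_eq_of_forall_le (h : take n x = take n y)
    (h_tail : ∀ k ≥ n, x k = y k) : x = y := by
  funext k
  rcases lt_or_ge k n with hk | hk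
  exacts [take_eq_take_iff.1 h k hk, h_tail k hk]

lemma card_prefix (n : ℕ) : Fintype.card (Prefix n) = (n + 1)! := by
  rw [Fintype.card_pi, ← Finset.prod_range_add_one_eq_factorial, Finset.prod_range_succ',
    ← Fin.prod_univ_eq_prod_range]
  simp

lemma take_add (x y : Digits) : take n (x + y) = take n x + take n y := rfl

lemma measurable_take (n : ℕ) : Measurable (take n) :=
  measurable_pi_lambda _ fun k => measurable_pi_apply (k : ℕ)

end Prefixes

def TailEq (x y : Digits) : Prop := ∀ᶠ k in atTop, x k = y k

namespace TailEq

variable {x y z : Digits}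

@[refl]
lemma refl (x : Digits) : TailEq x x := Eventually.of_forall fun _ => rfl

@[symm]
lemma symm (h : TailEq x y) : TailEq y x := h.mono fun _ => Eq.symm

@[trans]
lemma trans (h : TailEq x y) (h' : TailEq y z) : TailEq x z :=
  (h.and h').mono fun _ h => h.1.trans h.2

end TailEq

lemma sum_measure_take_preimage (ν : Measure Digits) (n : ℕ) :
    ∑ p : Prefix n, ν (take n ⁻¹' {p}) = ν Set.univ := by
  simpa using sum_measure_preimage_singleton (μ := ν) Finset.univ
    fun p _ => measurable_take n (measurableSet_singleton p)

noncomputable def haar : Measure Digits := Measure.addHaarMeasure ⊤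

instance : haar.IsAddHaarMeasure := by unfold haar; infer_instance

instance : IsProbabilityMeasure haar :=
  ⟨by simpa [haar] using
    Measure.addHaarMeasure_self (K₀ := (⊤ : TopologicalSpace.PositiveCompacts Digits))⟩

lemma haar_take_preimage (n : ℕ) (p : Prefix n) :
    haar (take n ⁻¹' {p}) = ((n + 1)! : ℝ≥0∞)⁻¹ := by
  have h_eq : ∀ q, haar (take n ⁻¹' {q}) = haar (take n ⁻¹' {p}) := fun q => by
    rw [← measure_preimage_add haar (withPrefix n (q - p) 0)]
    congr 1
    ext x
    simp only [Set.mem_preimage, Set.mem_singleton_iff, take_add, take_withPrefix]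
    rw [← eq_sub_iff_add_eq, sub_right_inj, eq_comm]
  have h_sum := sum_measure_take_preimage haar n
  simp only [h_eq, Finset.sum_const, Finset.card_univ, card_prefix, nsmul_eq_mul,
    measure_univ] at h_sum
  exact ENNReal.eq_inv_of_mul_eq_one_left (by rwa [mul_comm])

section Cylinders

variable {n n' m : ℕ}

lemma take_preimage_inter_of_le {p : Prefix n} {p' : Prefix n'} (h : n ≤ n')
    (hne : (take n ⁻¹' {p} ∩ take n' ⁻¹' {p'}).Nonempty) :
    take n ⁻¹' {p} ∩ take n' ⁻¹' {p'} = take n' ⁻¹' {p'} := by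
  obtain ⟨x₀, rfl, rfl⟩ := hne
  exact Set.inter_eq_right.2 fun x hx => (take_eq_take_of_le hx h :)

def cylinders (m : ℕ) : Set (Set Digits) :=
  {s | ∃ n ≥ m, ∃ p : Prefix n, s = take n ⁻¹' {p}}

lemma isPiSystem_cylinders (m : ℕ) : IsPiSystem (cylinders m) := by
  rintro _ ⟨n, hn, p, rfl⟩ _ ⟨n', hn', p', rfl⟩ hne
  rcases le_total n n' with h | h
  · rw [take_preimage_inter_of_le h hne]
    exact ⟨n', hn', p', rfl⟩
  · rw [Set.inter_comm] at hne ⊢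
    rw [take_preimage_inter_of_le h hne]
    exact ⟨n, hn, p, rfl⟩

lemma generateFrom_cylinders (m : ℕ) :
    MeasurableSpace.generateFrom (cylinders m) = MeasurableSpace.pi := by
  refine le_antisymm (MeasurableSpace.generateFrom_le ?_) (iSup_le fun k => ?_)
  · rintro _ ⟨n, -, p, rfl⟩
    exact measurable_take n (measurableSet_singleton p)
  · have h_take :
        Measurable[MeasurableSpace.generateFrom (cylinders m)] (take (max (k + 1) m)) :=
      @measurable_to_countable' _ _ _ _ (_) _ fun p =>
        MeasurableSpace.measurableSet_generateFrom ⟨_, le_max_right _ _, p, rfl⟩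
    exact ((measurable_pi_apply (⟨k, by omega⟩ : Fin (max (k + 1) m))).comp h_take).comap_le

lemma ext_of_cylinders {ν₁ ν₂ : Measure Digits} [IsFiniteMeasure ν₁] (m : ℕ)
    (h : ∀ n ≥ m, ∀ p : Prefix n, ν₁ (take n ⁻¹' {p}) = ν₂ (take n ⁻¹' {p}))
    (h_univ : ν₁ Set.univ = ν₂ Set.univ) : ν₁ = ν₂ :=
  ext_of_generate_finite _ (generateFrom_cylinders m).symm (isPiSystem_cylinders m)
    (by rintro _ ⟨n, hn, p, rfl⟩; exact h n hn p) h_univ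

end Cylinders

def RespectsTake (m : ℕ) (f : Digits → Digits) : Prop :=
  ∀ n ≥ m, ∀ x y, take n x = take n y → take n (f x) = take n (f y)

namespace RespectsTake

variable {m : ℕ} {f : Digits → Digits}

lemma mono (hf : RespectsTake m f) {m' : ℕ} (hm : m ≤ m') : RespectsTake m' f :=
  fun n hn => hf n (hm.trans hn)

lemma measurable (hf : RespectsTake m f) : Measurable f := by
  refine measurable_pi_iff.2 fun k => ?_
  have hk : k < max (k + 1) m := by omega
  have h_eq : (f · k) = (fun p => f (withPrefix _ p 0) k) ∘ take (max (k + 1) m) := by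
    funext x
    exact take_eq_take_iff.1 (hf _ (le_max_right _ _) _ _ (take_withPrefix _ 0).symm) k hk
  exact h_eq ▸ Measurable.of_discrete.comp (measurable_take _)

lemma measurePreserving (f : Digits ≃ Digits) (hf : RespectsTake m f)
    (hf_symm : RespectsTake m f.symm) : MeasurePreserving f haar haar := by
  refine ⟨hf.measurable, ext_of_cylinders m (fun n hn p => ?_)
    (by simp [Measure.map_apply hf.measurable .univ])⟩
  have h_pre : f ⁻¹' (take n ⁻¹' {p}) = take n ⁻¹' {take n (f.symm (withPrefix n p 0))} := by
    ext x
    simp only [Set.mem_preimage, Set.mem_singleton_iff]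
    constructor
    · intro hx
      simpa using hf_symm n hn _ _ (hx.trans (take_withPrefix p 0).symm)
    · intro hx
      simpa using hf n hn _ _ hx
  rw [Measure.map_apply hf.measurable (measurable_take n (measurableSet_singleton p)), h_pre,
    haar_take_preimage, haar_take_preimage]

end RespectsTake

def swapPrefix (n : ℕ) (u v : Prefix n) : Equiv.Perm Digits :=
  Function.Involutive.toPerm (fun x => withPrefix n (Equiv.swap u v (take n x)) x)
    fun x => by simp only [take_withPrefix, Equiv.swap_apply_self, withPrefix_withPrefix,
      withPrefix_take]

lemma swapPrefix_apply (n : ℕ) (u v : Prefix n) (x : Digits) :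
    swapPrefix n u v x = withPrefix n (Equiv.swap u v (take n x)) x := rfl

lemma respectsTake_swapPrefix (n : ℕ) (u v : Prefix n) : RespectsTake n (swapPrefix n u v) := by
  intro n' hn x y h
  have h_take : take n x = take n y := take_eq_take_of_le h hn
  refine take_eq_take_iff.2 fun k hk => ?_
  simp only [swapPrefix_apply, withPrefix, h_take]
  split_ifs
  · rfl
  · exact take_eq_take_iff.1 h k hk

lemma tailEq_swapPrefix (n : ℕ) (u v : Prefix n) (x : Digits) :
    TailEq x (swapPrefix n u v x) :=
  eventually_atTop.2 ⟨n, fun _ hk => (withPrefix_apply_of_le _ _ hk).symm⟩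

lemma measurePreserving_swapPrefix (n : ℕ) (u v : Prefix n) :
    MeasurePreserving (swapPrefix n u v) haar haar :=
  RespectsTake.measurePreserving _ (respectsTake_swapPrefix n u v) (respectsTake_swapPrefix n u v)

def IsTailInvariant (A : Set Digits) : Prop := ∀ x ∈ A, ∀ y, TailEq x y → y ∈ A

section TailInvariant

variable {A : Set Digits}

lemma haar_inter_take_preimage_eq (hA : MeasurableSet A) (hA_tail : IsTailInvariant A) (n : ℕ)
    (u v : Prefix n) :
    haar (A ∩ take n ⁻¹' {u}) = haar (A ∩ take n ⁻¹' {v}) := by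
  have h_pre : swapPrefix n u v ⁻¹' (A ∩ take n ⁻¹' {v}) = A ∩ take n ⁻¹' {u} := by
    ext x
    refine and_congr ⟨fun hx => hA_tail _ hx _ (tailEq_swapPrefix n u v x).symm,
      fun hx => hA_tail _ hx _ (tailEq_swapPrefix n u v x)⟩ ?_
    simp [swapPrefix_apply, Equiv.swap_apply_eq_iff]
  rw [← h_pre, (measurePreserving_swapPrefix n u v).measure_preimage
    (hA.inter (measurable_take n (measurableSet_singleton v))).nullMeasurableSet]

lemma haar_inter_take_preimage (hA : MeasurableSet A) (hA_tail : IsTailInvariant A) (n : ℕ)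
    (p : Prefix n) :
    haar (A ∩ take n ⁻¹' {p}) = haar A * haar (take n ⁻¹' {p}) := by
  have h_sum := sum_measure_take_preimage (haar.restrict A) n
  simp only [Measure.restrict_apply (measurable_take n (measurableSet_singleton _)),
    Set.inter_comm _ A, haar_inter_take_preimage_eq hA hA_tail n _ p, Finset.sum_const,
    Finset.card_univ, card_prefix, nsmul_eq_mul, Measure.restrict_apply_univ] at h_sum
  rw [haar_take_preimage, ← h_sum, mul_comm, ← mul_assoc,
    ENNReal.inv_mul_cancel (by positivity) (ENNReal.natCast_ne_top _), one_mul]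

lemma IsTailInvariant.haar_eq_zero_or_one (hA_tail : IsTailInvariant A) (hA : MeasurableSet A) :
    haar A = 0 ∨ haar A = 1 := by
  have h_restrict : haar.restrict A = haar A • haar :=
    ext_of_cylinders 0 (fun n _ p => by
      rw [Measure.restrict_apply (measurable_take n (measurableSet_singleton p)), Set.inter_comm,
        haar_inter_take_preimage hA hA_tail, Measure.smul_apply, smul_eq_mul]) (by simp)
  have h_self : haar (A ∩ A) = haar A * haar A := by
    simpa [Measure.restrict_apply hA] using congrArg (· A) h_restrict
  exact ProbabilityTheory.measure_eq_zero_or_one_of_indepSet_self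
    ((ProbabilityTheory.indepSet_iff_measure_inter_eq_mul hA hA haar).2 h_self)

end TailInvariant

def allLast : Digits := fun k => Fin.last (k + 1)

def addOne (x : Digits) : Digits :=
  fun k => if take k x = take k allLast then x k + 1 else x k

def subOne (x : Digits) : Digits :=
  fun k => if take k x = take k 0 then x k - 1 else x k

lemma take_addOne_eq_zero_iff {x : Digits} {k : ℕ} :
    take k (addOne x) = take k 0 ↔ take k x = take k allLast := by
  induction k with
  | zero => exact iff_of_true (Subsingleton.elim _ _) (Subsingleton.elim _ _)
  | succ k ih =>
    simp only [take_succ_eq_take_succ_iff, ih, addOne]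
    by_cases h : take k x = take k allLast
    · simp [h, allLast, ← Fin.last_add_one]
    · simp [h]

lemma take_subOne_eq_allLast_iff {x : Digits} {k : ℕ} :
    take k (subOne x) = take k allLast ↔ take k x = take k 0 := by
  induction k with
  | zero => exact iff_of_true (Subsingleton.elim _ _) (Subsingleton.elim _ _)
  | succ k ih =>
    simp only [take_succ_eq_take_succ_iff, ih, subOne]
    by_cases h : take k x = take k 0
    · simp [h, allLast, sub_eq_iff_eq_add, Fin.last_add_one]
    · simp [h]

lemma subOne_addOne (x : Digits) : subOne (addOne x) = x := by
  funext k
  by_cases h : take k x = take k allLast <;> simp [subOne, addOne, take_addOne_eq_zero_iff, h]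

lemma addOne_subOne (x : Digits) : addOne (subOne x) = x := by
  funext k
  by_cases h : take k x = take k 0 <;> simp [subOne, addOne, take_subOne_eq_allLast_iff, h]

def odometer : Equiv.Perm Digits := ⟨addOne, subOne, subOne_addOne, addOne_subOne⟩

lemma respectsTake_addOne : RespectsTake 0 addOne := fun n _ x y h =>
  take_eq_take_iff.2 fun k hk => by
    simp only [addOne, take_eq_take_of_le h hk.le, take_eq_take_iff.1 h k hk]

lemma respectsTake_subOne : RespectsTake 0 subOne := fun n _ x y h =>
  take_eq_take_iff.2 fun k hk => by
    simp only [subOne, take_eq_take_of_le h hk.le, take_eq_take_iff.1 h k hk]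

lemma measurePreserving_odometer_zpow (z : ℤ) :
    MeasurePreserving ⇑(odometer ^ z) haar haar := by
  rcases Int.eq_nat_or_neg z with ⟨m, rfl | rfl⟩
  · rw [zpow_natCast, Equiv.Perm.coe_pow]
    exact (RespectsTake.measurePreserving odometer respectsTake_addOne
      respectsTake_subOne).iterate m
  · rw [zpow_neg, zpow_natCast, ← inv_pow, Equiv.Perm.coe_pow]
    exact (RespectsTake.measurePreserving odometer.symm respectsTake_subOne
      respectsTake_addOne).iterate m

def value (n : ℕ) (x : Digits) : ℕ := ∑ k ∈ Finset.range n, (x k : ℕ) * (k + 1)!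

section Value

variable {n : ℕ} {x y : Digits}

lemma value_succ (n : ℕ) (x : Digits) : value (n + 1) x = value n x + x n * (n + 1)! :=
  Finset.sum_range_succ _ _

lemma value_lt (n : ℕ) (x : Digits) : value n x < (n + 1)! := by
  induction n with
  | zero => simp [value]
  | succ n ih =>
    have h_digit : (x n : ℕ) * (n + 1)! ≤ (n + 1) * (n + 1)! :=
      Nat.mul_le_mul_right _ (Nat.lt_succ_iff.1 (x n).isLt)
    rw [value_succ, Nat.factorial_succ (n + 1)]
    nlinarith

lemma value_congr (h : take n x = take n y) : value n x = value n y :=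
  Finset.sum_congr rfl fun k hk => by rw [take_eq_take_iff.1 h k (Finset.mem_range.1 hk)]

lemma value_allLast (n : ℕ) : value n allLast = (n + 1)! - 1 := by
  induction n with
  | zero => simp [value]
  | succ n ih =>
    have h_pos := Nat.factorial_pos (n + 1)
    rw [value_succ, ih, Nat.factorial_succ (n + 1)]
    simp only [allLast, Fin.val_last]
    rw [add_mul (n + 1) 1, one_mul]
    omega

lemma take_eq_of_value_eq (h : value n x = value n y) : take n x = take n y := by
  induction n with
  | zero => exact Subsingleton.elim _ _
  | succ n ih =>
    rw [value_succ, value_succ] at h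
    have h_pos := Nat.factorial_pos (n + 1)
    have h_mod := congrArg (· % (n + 1)!) h
    have h_div := congrArg (· / (n + 1)!) h
    simp only [Nat.add_mul_mod_self_right, Nat.mod_eq_of_lt (value_lt _ _),
      Nat.add_mul_div_right _ _ h_pos, Nat.div_eq_of_lt (value_lt _ _), zero_add] at h_mod h_div
    exact take_succ_eq_take_succ_iff.2 ⟨ih h_mod, Fin.ext h_div⟩

lemma addOne_apply_of_take_ne (h : take n x ≠ take n allLast) {k : ℕ} (hk : n ≤ k) :
    addOne x k = x k :=
  if_neg fun hk' => h (take_eq_take_of_le hk' hk)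

lemma value_addOne_of_take_ne (h : take n x ≠ take n allLast) :
    value n (addOne x) = value n x + 1 := by
  induction n with
  | zero => exact absurd (Subsingleton.elim _ _) h
  | succ n ih =>
    rw [value_succ, value_succ]
    by_cases h_carry : take n x = take n allLast
    · have h_last : x n ≠ Fin.last (n + 1) := fun h_last =>
        h (take_succ_eq_take_succ_iff.2 ⟨h_carry, h_last⟩)
      have h_zero : value n (addOne x) = 0 := by
        rw [value_congr (take_addOne_eq_zero_iff.2 h_carry)]
        simp [value]
      rw [h_zero, value_congr h_carry, value_allLast, addOne, if_pos h_carry,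
        Fin.val_add_one_of_lt (Fin.lt_last_iff_ne_last.2 h_last), add_mul, one_mul]
      have h_pos := Nat.factorial_pos (n + 1)
      omega
    · rw [ih h_carry, addOne_apply_of_take_ne h_carry le_rfl]
      ring

lemma value_addOne (n : ℕ) (x : Digits) : value n (addOne x) = (value n x + 1) % (n + 1)! := by
  by_cases h : take n x = take n allLast
  · rw [value_congr (take_addOne_eq_zero_iff.2 h), value_congr h, value_allLast,
      Nat.sub_add_cancel (Nat.factorial_pos _), Nat.mod_self]
    simp [value]
  · have h_ne : value n x ≠ (n + 1)! - 1 := fun h_eq =>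
      h (take_eq_of_value_eq (h_eq.trans (value_allLast n).symm))
    have h_lt := value_lt n x
    rw [value_addOne_of_take_ne h, Nat.mod_eq_of_lt (by omega)]

end Value

section OdometerOrbits

variable {x y : Digits}

lemma value_addOne_iterate (n m : ℕ) (x : Digits) :
    value n (addOne^[m] x) ≡ value n x + m [MOD (n + 1)!] := by
  induction m with
  | zero => rfl
  | succ m ih =>
    rw [Function.iterate_succ_apply', value_addOne, ← add_assoc]
    exact (Nat.mod_modEq _ _).trans (ih.add_right 1)

lemma addOne_iterate_ne {m : ℕ} (hm : m ≠ 0) (x : Digits) : addOne^[m] x ≠ x := by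
  intro h
  have h_mod := value_addOne_iterate m m x
  rw [h] at h_mod
  have h_dvd : (m + 1)! ∣ m :=
    (Nat.modEq_zero_iff_dvd.1
      (Nat.ModEq.add_left_cancel' (value m x) (by simpa using h_mod)).symm)
  have := Nat.le_of_dvd (Nat.pos_of_ne_zero hm) h_dvd
  have := Nat.self_le_factorial (m + 1)
  omega

lemma odometer_zpow_apply_ne {z : ℤ} (hz : z ≠ 0) (x : Digits) : (odometer ^ z) x ≠ x := by
  rcases Int.eq_nat_or_neg z with ⟨m, rfl | rfl⟩
  · rw [zpow_natCast, Equiv.Perm.coe_pow]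
    exact addOne_iterate_ne (by omega) x
  · rw [zpow_neg, zpow_natCast, Ne, Equiv.Perm.inv_eq_iff_eq, Equiv.Perm.coe_pow, eq_comm]
    exact addOne_iterate_ne (by omega) x

lemma addOne_iterate_eq {n : ℕ} (m : ℕ) (h_tail : ∀ k ≥ n, x k = y k)
    (h : value n x + m = value n y) : addOne^[m] x = y := by
  induction m generalizing x with
  | zero => exact eq_of_take_eq_of_forall_le (take_eq_of_value_eq h) h_tail
  | succ m ih =>
    have h_ne : take n x ≠ take n allLast := fun h_eq => by
      have := value_lt n y
      rw [value_congr h_eq, value_allLast] at h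
      omega
    rw [Function.iterate_succ_apply]
    refine ih (fun k hk => (addOne_apply_of_take_ne h_ne hk).trans (h_tail k hk)) ?_
    rw [value_addOne_of_take_ne h_ne]
    omega

lemma exists_odometer_zpow_eq (h : TailEq x y) : ∃ z : ℤ, (odometer ^ z) x = y := by
  obtain ⟨n, hn⟩ := eventually_atTop.1 h
  rcases le_total (value n x) (value n y) with hle | hle
  · refine ⟨(value n y - value n x : ℕ), ?_⟩
    rw [zpow_natCast, Equiv.Perm.coe_pow]
    exact addOne_iterate_eq _ hn (by omega)
  · refine ⟨-(value n x - value n y : ℕ), ?_⟩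
    rw [zpow_neg, zpow_natCast, Equiv.Perm.inv_eq_iff_eq, Equiv.Perm.coe_pow]
    exact (addOne_iterate_eq _ (fun k hk => (hn k hk).symm) (by omega)).symm

lemma tailEq_addOne (h : x ≠ allLast) : TailEq x (addOne x) := by
  obtain ⟨n, hn⟩ : ∃ n, x n ≠ allLast n := not_forall.1 fun h' => h (funext h')
  have h_ne : take (n + 1) x ≠ take (n + 1) allLast := fun h_eq =>
    hn (take_succ_eq_take_succ_iff.1 h_eq).2
  exact eventually_atTop.2 ⟨n + 1, fun k hk => (addOne_apply_of_take_ne h_ne hk).symm⟩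

lemma addOne_allLast : addOne allLast = 0 :=
  funext fun k => by simp [addOne, allLast]

lemma tailEq_odometer_zpow (h_zero : ¬ TailEq x 0) (h_last : ¬ TailEq x allLast) (z : ℤ) :
    TailEq x ((odometer ^ z) x) := by
  induction z using Int.induction_on with
  | zero => rfl
  | succ i ih =>
    rw [add_comm, zpow_one_add, Equiv.Perm.mul_apply]
    exact ih.trans (tailEq_addOne fun h => h_last (h ▸ ih))
  | pred i ih =>
    rw [sub_eq_neg_add, zpow_add, zpow_neg_one, Equiv.Perm.mul_apply]
    set w := (odometer ^ (-(i : ℤ))) x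
    have h_sub : subOne w ≠ allLast := fun h => h_zero <| by
      rwa [← addOne_subOne w, h, addOne_allLast] at ih
    have h_tail : TailEq (subOne w) w := by
      simpa only [addOne_subOne] using tailEq_addOne h_sub
    exact ih.trans h_tail.symm

end OdometerOrbits

def swapProd : ℕ → Digits → Equiv.Perm ℕ
  | 0, _ => 1
  | n + 1, x => swapProd n x * Equiv.swap (x n : ℕ) (n + 1)

section SwapProd

variable {n : ℕ} {x y : Digits}

lemma swapProd_apply_of_lt (x : Digits) {j : ℕ} (hj : n < j) : swapProd n x j = j := by
  induction n with
  | zero => rfl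
  | succ n ih =>
    have := (x n).isLt
    rw [swapProd, Equiv.Perm.mul_apply, Equiv.swap_apply_of_ne_of_ne (by omega) (by omega),
      ih (by omega)]

lemma swapProd_congr (h : take n x = take n y) : swapProd n x = swapProd n y := by
  induction n with
  | zero => rfl
  | succ n ih =>
    obtain ⟨h_take, h_digit⟩ := take_succ_eq_take_succ_iff.1 h
    rw [swapProd, swapProd, ih h_take, h_digit]

lemma swapProd_succ_inv_apply (n : ℕ) (x : Digits) : (swapProd (n + 1) x)⁻¹ (n + 1) = x n := by
  rw [swapProd, mul_inv_rev, Equiv.Perm.mul_apply,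
    Equiv.Perm.inv_eq_iff_eq.2 (swapProd_apply_of_lt x (Nat.lt_succ_self n)).symm,
    Equiv.swap_inv, Equiv.swap_apply_right]

lemma take_eq_of_swapProd_eq (h : swapProd n x = swapProd n y) : take n x = take n y := by
  induction n with
  | zero => exact Subsingleton.elim _ _
  | succ n ih =>
    have h_digit : x n = y n := Fin.ext <| by
      rw [← swapProd_succ_inv_apply n x, ← swapProd_succ_inv_apply n y, h]
    rw [swapProd, swapProd, h_digit, mul_left_inj] at h
    exact take_succ_eq_take_succ_iff.2 ⟨ih h, h_digit⟩

lemma exists_swapProd_eq {σ : Equiv.Perm ℕ} (hσ : ∀ j > n, σ j = j) :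
    ∃ x, swapProd n x = σ := by
  induction n generalizing σ with
  | zero =>
    have h_zero : σ 0 = 0 := by_contra fun h => h (σ.injective (hσ _ (Nat.pos_of_ne_zero h)))
    refine ⟨0, Equiv.ext fun j => ?_⟩
    rcases j with _ | j
    exacts [h_zero.symm, (hσ _ j.succ_pos).symm]
  | succ n ih =>
    set d := σ⁻¹ (n + 1)
    have h_σd : σ d = n + 1 := σ.apply_symm_apply _
    have h_d : d < n + 2 := by
      by_contra h
      have := hσ d (by omega)
      omega
    obtain ⟨x, hx⟩ := ih (σ := σ * Equiv.swap d (n + 1)) fun j hj => by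
      rcases (Nat.succ_le_of_lt hj).eq_or_lt with rfl | hj'
      · rw [Equiv.Perm.mul_apply, Equiv.swap_apply_right, h_σd]
      · rw [Equiv.Perm.mul_apply, Equiv.swap_apply_of_ne_of_ne (by omega) (by omega),
          hσ j (by omega)]
    refine ⟨Function.update x n ⟨d, h_d⟩, ?_⟩
    have h_take : take n (Function.update x n ⟨d, h_d⟩) = take n x :=
      take_eq_take_iff.2 fun k hk => Function.update_of_ne hk.ne _ _
    rw [swapProd, swapProd_congr h_take, hx, Function.update_self, mul_assoc,
      Equiv.swap_mul_self, mul_one]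

end SwapProd

/-- `y = σ • x`, read off from the first `n` digits. -/
def IsActAt (n : ℕ) (σ : Equiv.Perm ℕ) (x y : Digits) : Prop :=
  (∀ k ≥ n, y k = x k) ∧ swapProd n y = σ * swapProd n x

namespace IsActAt

variable {n : ℕ} {σ τ : Equiv.Perm ℕ} {x y z : Digits}

lemma one (n : ℕ) (x : Digits) : IsActAt n 1 x x := ⟨fun _ _ => rfl, (one_mul _).symm⟩

lemma mul (h : IsActAt n τ x y) (h' : IsActAt n σ y z) : IsActAt n (σ * τ) x z :=
  ⟨fun k hk => (h'.1 k hk).trans (h.1 k hk), by rw [h'.2, h.2, mul_assoc]⟩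

lemma succ (h : IsActAt n σ x y) : IsActAt (n + 1) σ x y :=
  ⟨fun k hk => h.1 k (by omega), by rw [swapProd, swapProd, h.1 n le_rfl, h.2, mul_assoc]⟩

lemma of_succ (h : IsActAt (n + 1) σ x y) (hσ : σ (n + 1) = n + 1) : IsActAt n σ x y := by
  obtain ⟨h_tail, h_perm⟩ := h
  have h_digit : y n = x n := Fin.ext <| by
    rw [← swapProd_succ_inv_apply, ← swapProd_succ_inv_apply, h_perm, mul_inv_rev,
      Equiv.Perm.mul_apply, Equiv.Perm.inv_eq_iff_eq.2 hσ.symm]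
  refine ⟨fun k hk => ?_, ?_⟩
  · rcases hk.eq_or_lt with rfl | hk
    exacts [h_digit, h_tail k hk]
  · rwa [swapProd, swapProd, h_digit, ← mul_assoc, mul_left_inj] at h_perm

lemma mono (h : IsActAt n σ x y) {n' : ℕ} (hn : n ≤ n') : IsActAt n' σ x y := by
  induction n', hn using Nat.le_induction with
  | base => exact h
  | succ n' _ ih => exact ih.succ

lemma of_le {n' : ℕ} (h : IsActAt n' σ x y) (hn : n ≤ n') (hσ : ∀ j > n, σ j = j) :
    IsActAt n σ x y := by
  induction n', hn using Nat.le_induction with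
  | base => exact h
  | succ n' hn ih => exact ih (h.of_succ (hσ _ (by omega)))

lemma of_fixes {n' : ℕ} (h : IsActAt n' σ x y) (hσ : ∀ j > n, σ j = j) : IsActAt n σ x y :=
  (h.mono (le_max_right n n')).of_le (le_max_left n n') hσ

lemma unique (h : IsActAt n σ x y) (h' : IsActAt n σ x z) : y = z :=
  eq_of_take_eq_of_forall_le (take_eq_of_swapProd_eq (h.2.trans h'.2.symm))
    fun k hk => (h.1 k hk).trans (h'.1 k hk).symm

lemma eq_one (h : IsActAt n σ x x) : σ = 1 := (mul_eq_right.1 h.2.symm)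

lemma take_congr {x' y' : Digits} (h : IsActAt n σ x y) (h' : IsActAt n σ x' y')
    (hx : take n x = take n x') : take n y = take n y' :=
  take_eq_of_swapProd_eq (by rw [h.2, h'.2, swapProd_congr hx])

lemma tailEq (h : IsActAt n σ x y) : TailEq x y :=
  eventually_atTop.2 ⟨n, fun k hk => (h.1 k hk).symm⟩

end IsActAt

lemma exists_isActAt {n : ℕ} {σ : Equiv.Perm ℕ} (hσ : ∀ j > n, σ j = j) (x : Digits) :
    ∃ y, IsActAt n σ x y := by
  obtain ⟨x', hx'⟩ := exists_swapProd_eq (σ := σ * swapProd n x) fun j hj => by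
    rw [Equiv.Perm.mul_apply, swapProd_apply_of_lt x hj, hσ j hj]
  refine ⟨withPrefix n (take n x') x, fun k hk => withPrefix_apply_of_le _ _ hk, ?_⟩
  rw [← hx']
  exact swapProd_congr (take_withPrefix _ _)

lemma isActAt_swapProd_mul_inv {n : ℕ} {x y : Digits} (h : ∀ k ≥ n, x k = y k) :
    IsActAt n (swapProd n y * (swapProd n x)⁻¹) x y :=
  ⟨fun k hk => (h k hk).symm, by rw [inv_mul_cancel_right]⟩

lemma exists_fixes_above_of_mem_sInf {σ : Equiv.Perm ℕ} (hσ : σ ∈ SInf) :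
    ∃ n, ∀ j > n, σ j = j := by
  obtain ⟨n, hn⟩ := (hσ : {j | σ j ≠ j}.Finite).bddAbove
  exact ⟨n, fun j hj => not_not.1 fun h => (hn h).not_gt hj⟩

lemma mem_sInf_of_fixes_above {n : ℕ} {σ : Equiv.Perm ℕ} (hσ : ∀ j > n, σ j = j) : σ ∈ SInf :=
  (Set.finite_Iic n).subset fun j hj => not_lt.1 fun h => hj (hσ j h)

lemma exists_isAct (σ : SInf) (x : Digits) : ∃ y, ∃ n, IsActAt n σ x y := by
  obtain ⟨n, hn⟩ := exists_fixes_above_of_mem_sInf σ.2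
  obtain ⟨y, hy⟩ := exists_isActAt hn x
  exact ⟨y, n, hy⟩

noncomputable def act (σ : SInf) (x : Digits) : Digits := (exists_isAct σ x).choose

lemma isActAt_act (σ : SInf) {n : ℕ} (hσ : ∀ j > n, (σ : Equiv.Perm ℕ) j = j) (x : Digits) :
    IsActAt n σ x (act σ x) :=
  (exists_isAct σ x).choose_spec.choose_spec.of_fixes hσ

noncomputable instance : MulAction SInf Digits where
  smul := act
  one_smul x := ((IsActAt.one 0 x).unique (isActAt_act 1 (fun _ _ => rfl) x)).symm
  mul_smul σ τ x := by
    obtain ⟨m, hm⟩ := exists_fixes_above_of_mem_sInf σ.2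
    obtain ⟨m', hm'⟩ := exists_fixes_above_of_mem_sInf τ.2
    have hσ : ∀ j > max m m', (σ : Equiv.Perm ℕ) j = j := fun j hj => hm j (by omega)
    have hτ : ∀ j > max m m', (τ : Equiv.Perm ℕ) j = j := fun j hj => hm' j (by omega)
    exact (isActAt_act (σ * τ) (fun j hj => by simp [hσ j hj, hτ j hj]) x).unique
      ((isActAt_act τ hτ x).mul (isActAt_act σ hσ _))

lemma smul_def (σ : SInf) (x : Digits) : σ • x = act σ x := rfl

lemma respectsTake_smul (σ : SInf) : ∃ n, RespectsTake n (σ • ·) := by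
  obtain ⟨n, hn⟩ := exists_fixes_above_of_mem_sInf σ.2
  exact ⟨n, fun n' hn' x y h =>
    (isActAt_act σ hn x).mono hn' |>.take_congr ((isActAt_act σ hn y).mono hn') h⟩

lemma measurePreserving_smul (σ : SInf) :
    MeasurePreserving (σ • · : Digits → Digits) haar haar := by
  obtain ⟨n, hn⟩ := respectsTake_smul σ
  obtain ⟨n', hn'⟩ := respectsTake_smul σ⁻¹
  exact RespectsTake.measurePreserving (MulAction.toPerm σ) (hn.mono (le_max_left n n'))
    (hn'.mono (le_max_right n n'))

lemma eq_one_of_smul_eq_self {σ : SInf} {x : Digits} (h : σ • x = x) : σ = 1 := by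
  obtain ⟨n, hn⟩ := exists_fixes_above_of_mem_sInf σ.2
  have := isActAt_act σ hn x
  rw [← smul_def, h] at this
  exact Subtype.ext this.eq_one

lemma tailEq_smul (σ : SInf) (x : Digits) : TailEq x (σ • x) := by
  obtain ⟨n, hn⟩ := exists_fixes_above_of_mem_sInf σ.2
  exact (isActAt_act σ hn x).tailEq

lemma exists_smul_eq {x y : Digits} (h : TailEq x y) : ∃ σ : SInf, σ • x = y := by
  obtain ⟨n, hn⟩ := eventually_atTop.1 h
  have h_fix : ∀ j > n, (swapProd n y * (swapProd n x)⁻¹) j = j := fun j hj => by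
    rw [Equiv.Perm.mul_apply, Equiv.Perm.inv_eq_iff_eq.2 (swapProd_apply_of_lt x hj).symm,
      swapProd_apply_of_lt y hj]
  exact ⟨⟨_, mem_sInf_of_fixes_above h_fix⟩,
    (isActAt_act ⟨_, mem_sInf_of_fixes_above h_fix⟩ h_fix x).unique (isActAt_swapProd_mul_inv hn)⟩

lemma isFreeAction_of_apply_ne {G X : Type*} [Group G] [MeasurableSpace X] (μ : Measure X)
    (a : G →* Equiv.Perm X) (h : ∀ g ≠ 1, ∀ x, a g x ≠ x) : IsFreeAction μ a := fun g hg =>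
  measure_mono_null (fun x hx => (h g hg x hx).elim) measure_empty

lemma isErgodicAction_of_tailEq {G : Type*} [Group G] (a : G →* Equiv.Perm Digits)
    (h : ∀ x y, TailEq x y → y ∈ orbitOf a x) : IsErgodicAction haar a := by
  intro A hA hA_inv
  refine IsTailInvariant.haar_eq_zero_or_one (fun x hx y hxy => ?_) hA
  obtain ⟨g, rfl⟩ := h x y hxy
  rw [← hA_inv g] at hx
  exact hx

instance : (𝓝[≠] (0 : Digits)).NeBot := by
  have h_lim : Tendsto (fun N : ℕ => (Pi.single N 1 : Digits)) atTop (𝓝 0) :=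
    tendsto_pi_nhds.2 fun k => tendsto_const_nhds.congr' <|
      eventually_atTop.2 ⟨k + 1, fun N hN => by simp [Pi.single_eq_of_ne (Nat.ne_of_lt hN)]⟩
  exact mem_closure_iff_nhdsWithin_neBot.1 <| mem_closure_of_tendsto h_lim <|
    Eventually.of_forall fun N => Pi.single_ne_zero_iff.2 one_ne_zero

lemma countable_setOf_tailEq (c : Digits) : {x | TailEq x c}.Countable := by
  refine (Set.countable_iUnion fun n =>
    Set.countable_range fun p : Prefix n => withPrefix n p c).mono fun x hx => ?_
  obtain ⟨n, hn⟩ := eventually_atTop.1 hx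
  exact Set.mem_iUnion.2 ⟨n, take n x, eq_of_take_eq_of_forall_le (take_withPrefix _ _)
    fun k hk => (withPrefix_apply_of_le _ _ hk).trans (hn k hk).symm⟩

noncomputable abbrev finitaryAction : SInf →* Equiv.Perm Digits :=
  MulAction.toPermHom SInf Digits

noncomputable abbrev odometerAction : Multiplicative ℤ →* Equiv.Perm Digits :=
  zpowersHom _ odometer

lemma orbitOf_finitaryAction (x : Digits) : orbitOf finitaryAction x = {y | TailEq x y} :=
  Set.ext fun _ => ⟨by rintro ⟨σ, rfl⟩; exact tailEq_smul σ x, exists_smul_eq⟩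

lemma orbitOf_odometerAction {x : Digits} (h_zero : ¬ TailEq x 0)
    (h_last : ¬ TailEq x allLast) :
    orbitOf odometerAction x = {y | TailEq x y} :=
  Set.ext fun _ => ⟨by rintro ⟨z, rfl⟩; exact tailEq_odometer_zpow h_zero h_last z.toAdd,
    fun h => (exists_odometer_zpow_eq h).imp fun _ hz => hz⟩

lemma ae_orbitOf_finitaryAction_eq_orbitOf_odometerAction :
    ∀ᵐ x ∂haar, orbitOf finitaryAction x = orbitOf odometerAction x := by
  have h_null : ∀ᵐ x ∂haar, ¬ TailEq x 0 ∧ ¬ TailEq x allLast :=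
    ((countable_setOf_tailEq 0).union (countable_setOf_tailEq allLast)).measure_zero haar |>
      measure_mono_null fun _ hx => (not_and_or.1 hx).imp not_not.1 not_not.1
  filter_upwards [h_null] with x hx
  rw [orbitOf_finitaryAction, orbitOf_odometerAction hx.1 hx.2]

end FactorialOdometer

open FactorialOdometer

/-- The finitary permutation group of ℕ and ℤ are orbit equivalent. -/
theorem sInf_orbitEquivalent_int : AreOrbitEquivalent ↥SInf (Multiplicative ℤ) :=
  ⟨Digits, inferInstance, haar, inferInstance, inferInstance, finitaryAction, odometerAction,
    measurePreserving_smul,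
    isFreeAction_of_apply_ne haar _ fun _ hσ _ h => hσ (eq_one_of_smul_eq_self h),
    isErgodicAction_of_tailEq _ fun _ _ => exists_smul_eq,
    fun z => measurePreserving_odometer_zpow z.toAdd,
    isFreeAction_of_apply_ne haar _ fun _ hz => odometer_zpow_apply_ne hz,
    isErgodicAction_of_tailEq _ fun _ _ => exists_odometer_zpow_eq,
    ae_orbitOf_finitaryAction_eq_orbitOf_odometerAction⟩
end

section
/- Being an ICC group is not an orbit equivalence invariant: there exist countably infinite groups Γ₀ and Λ₀ such that Γ₀ is ICC, Λ₀ is abelian (hence not ICC), and Γ₀ and Λ₀ are orbit equivalent, i.e., they admit free, ergodic, probability-measure-preserving actions on a common standard Borel probability space whose orbits agree almost everywhere. -/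
open MeasureTheory

/-- A group is abelian if its multiplication is commutative. -/
def IsAbelianGroup (G : Type*) [Group G] : Prop :=
  ∀ x y : G, x * y = y * x

/-!
Both groups act on `X = ∏ₙ ℤ/(n+1)` with the product of the uniform measures, and for both
actions the orbit of `x` is its tail class `{y | y n = x n for all large n}`. The abelian group
`⊕ₙ ℤ/(n+1)` acts by translation. The group of finitary permutations of `ℕ`, which is ICC, acts
through the Lehmer code: the digits `x 0, …, x (M - 1)` encode the permutation
`swap (x 0) 0 * ⋯ * swap (x (M - 1)) (M - 1)` of `{0, …, M - 1}`, and a permutation supported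
below `M` acts by left multiplication on it, freely and transitively on each tail class.
Ergodicity of both actions is Kolmogorov's zero-one law for tail-saturated sets, and the Lehmer
action preserves the measure because each of its elements lies in the full group of the
translation action.
-/

open Equiv Filter ProbabilityTheory

theorem IsICCGroup.infinite {G : Type*} [Group G] [Nontrivial G] (h : IsICCGroup G) :
    Infinite G := by
  obtain ⟨g, hg⟩ := exists_ne (1 : G)
  exact Set.infinite_univ_iff.1 ((h g hg).mono (Set.subset_univ _))

theorem IsAbelianGroup.not_isICCGroup {G : Type*} [Group G] [Nontrivial G]
    (h : IsAbelianGroup G) : ¬ IsICCGroup G := by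
  obtain ⟨g, hg⟩ := exists_ne (1 : G)
  refine fun hicc => hicc g hg ((Set.finite_singleton g).subset ?_)
  rintro _ ⟨k, rfl⟩
  simp [h k g]

section Actions

variable {G H X : Type*} [Group G] [Group H] [MeasurableSpace X] {μ : Measure X}

theorem isFreeAction_of_forall_apply_eq_self {a : G →* Perm X}
    (h : ∀ g x, a g x = x → g = 1) : IsFreeAction μ a := by
  intro g hg
  convert measure_empty (μ := μ)
  exact Set.eq_empty_of_forall_notMem fun x hx => hg (h g x hx)

theorem measure_eq_tsum_inter_of_pairwise_aedisjoint {ι : Type*} [Countable ι] {W : ι → Set X}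
    (hW : ∀ i, MeasurableSet (W i)) (hdisj : Pairwise (Function.onFun (AEDisjoint μ) W))
    (hcover : ∀ x, ∃ i, x ∈ W i) {S : Set X} (hS : MeasurableSet S) :
    μ S = ∑' i, μ (S ∩ W i) := by
  have hS_eq : S = ⋃ i, S ∩ W i := by
    ext x
    simpa using fun _ => hcover x
  conv_lhs => rw [hS_eq]
  exact measure_iUnion₀ (fun i j hij => (hdisj hij).mono Set.inter_subset_right
    Set.inter_subset_right) fun i => (hS.inter (hW i)).nullMeasurableSet

variable {b : H →* Perm X}

theorem IsFreeAction.pairwise_aedisjoint_eq_apply (hfree : IsFreeAction μ b) (f : X → X) :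
    Pairwise (Function.onFun (AEDisjoint μ) fun h => {x | f x = b h x}) := by
  intro h h' hne
  refine measure_mono_null (fun x ⟨hx, hx'⟩ => ?_)
    (hfree (h'⁻¹ * h) (by simpa [inv_mul_eq_one] using hne.symm))
  simp only [Set.mem_ofPred_eq] at hx hx' ⊢
  rw [map_mul, map_inv, Perm.mul_apply, ← hx, hx', Perm.coe_inv,
    symm_apply_apply]

/-- On the piece where `π` agrees with `b h` it is measure preserving, and `b h` maps this piece
onto the piece where `π⁻¹` agrees with `b h⁻¹`. -/
theorem measurePreserving_of_mem_orbitOf [Countable H] (hpmp : IsPMPAction μ b)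
    (hfree : IsFreeAction μ b) (π : Perm X) (horbit : ∀ x, π x ∈ orbitOf b x)
    (hmeas : ∀ h, MeasurableSet {x | π x = b h x}) : MeasurePreserving π μ μ := by
  set U : H → Set X := fun h => {x | π x = b h x}
  set V : H → Set X := fun h => {y | π⁻¹ y = b h⁻¹ y}
  have hV : ∀ h, V h = b h⁻¹ ⁻¹' U h := by
    intro h; ext y
    simp only [V, U, Set.mem_preimage, Set.mem_ofPred_eq, map_inv, Perm.coe_inv,
      apply_symm_apply]
    rw [symm_apply_eq, eq_comm]
  have hpiece : ∀ S h, π ⁻¹' S ∩ U h = b h ⁻¹' (S ∩ V h) := by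
    intro S h; ext x
    simp only [hV, U, Set.mem_inter_iff, Set.mem_preimage, Set.mem_ofPred_eq, map_inv,
      Perm.coe_inv, symm_apply_apply]
    exact ⟨fun ⟨hS, hx⟩ => ⟨hx ▸ hS, hx⟩, fun ⟨hS, hx⟩ => ⟨hx ▸ hS, hx⟩⟩
  have hUcover : ∀ x, ∃ h, x ∈ U h := fun x => (horbit x).imp fun h hh => hh.symm
  have hVcover : ∀ y, ∃ h, y ∈ V h := by
    intro y
    obtain ⟨h, hh⟩ := horbit (π⁻¹ y)
    refine ⟨h, ?_⟩
    simp only [V, Set.mem_ofPred_eq, map_inv, Perm.coe_inv, apply_symm_apply] at hh ⊢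
    exact (eq_symm_apply _).2 hh
  have hVmeas : ∀ h, MeasurableSet (V h) := fun h => hV h ▸ (hpmp h⁻¹).measurable (hmeas h)
  have hπ : Measurable π := by
    intro S hS
    have : π ⁻¹' S = ⋃ h, b h ⁻¹' (S ∩ V h) := by
      rw [← Set.iUnion_congr (hpiece S), ← Set.inter_iUnion, Set.iUnion_eq_univ_iff.2 hUcover,
        Set.inter_univ]
    rw [this]
    exact MeasurableSet.iUnion fun h => (hpmp h).measurable (hS.inter (hVmeas h))
  refine ⟨hπ, Measure.ext fun S hS => ?_⟩
  rw [Measure.map_apply hπ hS, measure_eq_tsum_inter_of_pairwise_aedisjoint hmeas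
      (IsFreeAction.pairwise_aedisjoint_eq_apply hfree π) hUcover (hπ hS),
    measure_eq_tsum_inter_of_pairwise_aedisjoint hVmeas ?_ hVcover hS]
  · exact tsum_congr fun h => by
      rw [hpiece, (hpmp h).measure_preimage (hS.inter (hVmeas h)).nullMeasurableSet]
  · exact (IsFreeAction.pairwise_aedisjoint_eq_apply hfree ⇑π⁻¹).comp_of_injective inv_injective

end Actions

theorem DependsOn.measurable {ι : Type*} {α : ι → Type*} [∀ i, MeasurableSpace (α i)]
    [∀ i, Countable (α i)] [∀ i, MeasurableSingletonClass (α i)] {β : Type*} [MeasurableSpace β]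
    [Nonempty β] {f : (Π i, α i) → β} {s : Set ι} (hs : s.Finite) (hf : DependsOn f s) :
    Measurable f := by
  obtain ⟨g, rfl⟩ := dependsOn_iff_exists_comp.1 hf
  have := hs.to_subtype
  exact (measurable_of_countable g).comp (measurable_pi_lambda _ fun i => measurable_pi_apply _)

section Tail

variable {E : ℕ → Type*} [∀ n, MeasurableSpace (E n)]

theorem measurableSet_limsup_comap_eval_of_eventually_eq {A : Set (Π n, E n)}
    (hA : MeasurableSet A) (hsat : ∀ x y, (∀ᶠ n in atTop, x n = y n) → x ∈ A → y ∈ A) :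
    MeasurableSet[limsup (fun n => MeasurableSpace.comap (fun x : Π n, E n => x n) inferInstance)
      atTop] A := by
  rcases A.eq_empty_or_nonempty with rfl | ⟨x₀, -⟩
  · exact @MeasurableSet.empty _ (_)
  rw [limsup_eq_iInf_iSup_of_nat, MeasurableSpace.measurableSet_iInf]
  intro M
  set φ : (Π n, E n) → Π n, E n := fun x n => if n < M then x₀ n else x n
  have hφ : ∀ x, ∀ᶠ n in atTop, φ x n = x n :=
    fun x => eventually_atTop.2 ⟨M, fun n hn => if_neg (not_lt.2 hn)⟩
  have hA_eq : φ ⁻¹' A = A :=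
    Set.ext fun x => ⟨hsat _ _ (hφ x), hsat _ _ ((hφ x).mono fun _ => Eq.symm)⟩
  have hφ_meas : Measurable[⨆ n ≥ M, MeasurableSpace.comap (fun x : Π n, E n => x n)
      inferInstance] φ := by
    refine @measurable_pi_lambda _ _ _ (_) _ _ fun n => ?_
    by_cases hn : n < M
    · simp only [φ, hn, if_true]
      exact measurable_const
    · simp only [φ, hn, if_false]
      exact (comap_measurable _).mono (le_iSup₂_of_le n (not_lt.1 hn) le_rfl) le_rfl
  exact hA_eq ▸ hφ_meas hA

variable (ν : ∀ n, Measure (E n)) [∀ n, IsProbabilityMeasure (ν n)]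

theorem infinitePi_eq_zero_or_one_of_eventually_eq {A : Set (Π n, E n)} (hA : MeasurableSet A)
    (hsat : ∀ x y, (∀ᶠ n in atTop, x n = y n) → x ∈ A → y ∈ A) :
    Measure.infinitePi ν A = 0 ∨ Measure.infinitePi ν A = 1 :=
  measure_zero_or_one_of_measurableSet_limsup_atTop (fun n => (measurable_pi_apply n).comap_le)
    ((iIndepFun_iff_iIndep _ _ _).1 (iIndepFun_infinitePi (X := fun _ => id)
      fun _ => measurable_id)) (measurableSet_limsup_comap_eval_of_eventually_eq hA hsat)

theorem isErgodicAction_infinitePi {G : Type*} [Group G] (a : G →* Perm (Π n, E n))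
    (ha : ∀ x, orbitOf a x = {y | ∀ᶠ n in atTop, y n = x n}) :
    IsErgodicAction (Measure.infinitePi ν) a := by
  intro A hA hinv
  refine infinitePi_eq_zero_or_one_of_eventually_eq ν hA fun x y hxy hx => ?_
  obtain ⟨g, rfl⟩ : y ∈ orbitOf a x := (ha x).symm ▸ hxy.mono fun _ => Eq.symm
  rwa [← hinv g] at hx

end Tail

instance isAddLeftInvariant_infinitePi {ι : Type*} {E : ι → Type*}
    [∀ i, MeasurableSpace (E i)] [∀ i, AddGroup (E i)] [∀ i, MeasurableAdd (E i)]
    (ν : ∀ i, Measure (E i)) [∀ i, IsProbabilityMeasure (ν i)] [∀ i, (ν i).IsAddLeftInvariant] :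
    (Measure.infinitePi ν).IsAddLeftInvariant where
  map_add_left_eq_self s := by
    rw [show (s + ·) = fun x i => s i + x i from rfl,
      Measure.infinitePi_map_pi _ fun i => measurable_const_add (s i)]
    simp only [map_add_left_eq_self]

instance isAddLeftInvariant_uniformOn_univ {G : Type*} [MeasurableSpace G]
    [AddGroup G] [MeasurableAdd G] : (uniformOn (Set.univ : Set G)).IsAddLeftInvariant := by
  rw [uniformOn, ProbabilityTheory.cond, Measure.restrict_univ]
  infer_instance

section Translation

variable (E : ℕ → Type*) [∀ n, AddGroup (E n)]

def translationAction : Multiplicative (Π₀ n, E n) →* Perm (Π n, E n) :=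
  AddMonoidHom.toMultiplicativeLeft ((AddAction.toPermHom _ _).comp DFinsupp.coeFnAddMonoidHom)

variable {E}

theorem translationAction_apply (s : Multiplicative (Π₀ n, E n)) (x : Π n, E n) :
    translationAction E s x = ⇑s.toAdd + x := rfl

theorem eq_one_of_translationAction_apply_eq_self {s : Multiplicative (Π₀ n, E n)}
    {x : Π n, E n} (h : translationAction E s x = x) : s = 1 := by
  rw [translationAction_apply, add_eq_right] at h
  exact toAdd_eq_zero.1 (DFunLike.coe_injective h)

theorem orbitOf_translationAction (x : Π n, E n) :
    orbitOf (translationAction E) x = {y | ∀ᶠ n in atTop, y n = x n} := by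
  ext y
  constructor
  · rintro ⟨s, rfl⟩
    refine (Nat.cofinite_eq_atTop ▸ s.toAdd.finite_support.eventually_cofinite_notMem).mono ?_
    intro n hn
    simp [translationAction_apply, not_not.1 hn]
  · intro hy
    obtain ⟨M, hM⟩ := eventually_atTop.1 hy
    refine ⟨Multiplicative.ofAdd (DFinsupp.mk (Finset.range M) fun n => y n - x n), ?_⟩
    ext n
    by_cases hn : n < M
    · simp [translationAction_apply, hn]
    · simp [translationAction_apply, hn, hM n (not_lt.1 hn)]

theorem isPMPAction_translationAction [∀ n, MeasurableSpace (E n)] [∀ n, MeasurableAdd (E n)]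
    (μ : Measure (Π n, E n)) [μ.IsAddLeftInvariant] : IsPMPAction μ (translationAction E) :=
  fun s => measurePreserving_add_left μ ⇑s.toAdd

end Translation

section Finitary

def finitaryPerm : Subgroup (Perm ℕ) where
  carrier := {σ | ∃ M, ∀ k, M ≤ k → σ k = k}
  one_mem' := ⟨0, fun _ _ => rfl⟩
  mul_mem' := by
    rintro σ τ ⟨M, hM⟩ ⟨N, hN⟩
    exact ⟨max M N, fun k hk => by
      rw [Perm.mul_apply, hN k (le_of_max_le_right hk), hM k (le_of_max_le_left hk)]⟩
  inv_mem' := by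
    rintro σ ⟨M, hM⟩
    exact ⟨M, fun k hk => Perm.inv_eq_iff_eq.2 (hM k hk).symm⟩

theorem swap_mem_finitaryPerm (a b : ℕ) : swap a b ∈ finitaryPerm :=
  ⟨max a b + 1, fun _ hk => swap_apply_of_ne_of_ne (by omega) (by omega)⟩

noncomputable def finitaryBound (g : finitaryPerm) : ℕ := g.2.choose

theorem apply_of_finitaryBound_le (g : finitaryPerm) {k : ℕ} (hk : finitaryBound g ≤ k) :
    (g : Perm ℕ) k = k :=
  g.2.choose_spec k hk

instance : Nontrivial finitaryPerm :=
  ⟨⟨⟨swap 0 1, swap_mem_finitaryPerm 0 1⟩, 1, fun h => by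
    simpa using DFunLike.congr_fun (congrArg Subtype.val h) 0⟩⟩

instance : Countable finitaryPerm := by
  refine Function.Injective.countable
    (f := fun g : finitaryPerm => (List.range (finitaryBound g)).map (g : Perm ℕ)) ?_
  intro g h hgh
  have hbound : finitaryBound g = finitaryBound h := by simpa using congrArg List.length hgh
  simp only [hbound] at hgh
  ext k
  by_cases hk : k < finitaryBound h
  · exact List.map_inj_left.1 hgh k (List.mem_range.2 hk)
  · rw [apply_of_finitaryBound_le g (by omega), apply_of_finitaryBound_le h (by omega)]

/-- For large `c`, the conjugate of `g` by `swap a c` sends `c` to `g a ≠ c` and fixes every other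
large point, so different `c` give different conjugates. -/
theorem isICCGroup_finitaryPerm : IsICCGroup finitaryPerm := by
  intro g hg
  obtain ⟨a, ha⟩ : ∃ a, (g : Perm ℕ) a ≠ a := by
    by_contra! h
    exact hg (Subtype.ext (Perm.ext h))
  obtain ⟨B, haB, hgaB, hgB⟩ : ∃ B, a < B ∧ (g : Perm ℕ) a < B ∧ finitaryBound g ≤ B :=
    ⟨max (max a ((g : Perm ℕ) a)) (finitaryBound g) + 1, by omega, by omega, by omega⟩
  let t : ℕ → finitaryPerm := fun i => ⟨swap a (B + i), swap_mem_finitaryPerm _ _⟩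
  refine Set.infinite_of_injective_forall_mem (f := fun i => t i * g * (t i)⁻¹)
    (fun i j hij => ?_) fun i => ⟨t i, rfl⟩
  by_contra hne
  have hconj := DFunLike.congr_fun (congrArg Subtype.val hij) (B + i)
  simp only [t, Subgroup.coe_mul, Subgroup.coe_inv, Perm.mul_apply, swap_inv,
    swap_apply_right] at hconj
  have hij' : B + i ≠ B + j := by omega
  rw [swap_apply_of_ne_of_ne (a := a) (by omega) hij',
    apply_of_finitaryBound_le g (k := B + i) (by omega),
    swap_apply_of_ne_of_ne (a := a) (by omega) hij', swap_apply_of_ne_of_ne ha (by omega)] at hconj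
  omega

end Finitary

section Lehmer

/-- As the digits `x n ∈ {0, …, n}` with `n < M` vary, `lehmerPerm x M` runs exactly once through
the permutations of `{0, …, M - 1}` (the Lehmer code). -/
def lehmerPerm (x : Π n : ℕ, ZMod (n + 1)) : ℕ → Perm ℕ
  | 0 => 1
  | M + 1 => lehmerPerm x M * swap (x M).val M

variable {x y : Π n : ℕ, ZMod (n + 1)}

theorem lehmerPerm_apply_of_le {M k : ℕ} (hk : M ≤ k) : lehmerPerm x M k = k := by
  induction M with
  | zero => rfl
  | succ M ih =>
    have hxM : (x M).val < M + 1 := ZMod.val_lt (x M)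
    rw [lehmerPerm, Perm.mul_apply, swap_apply_of_ne_of_ne (by omega) (by omega), ih (by omega)]

theorem lehmerPerm_mem_finitaryPerm (M : ℕ) : lehmerPerm x M ∈ finitaryPerm :=
  ⟨M, fun _ => lehmerPerm_apply_of_le⟩

theorem lehmerPerm_congr {M : ℕ} (h : ∀ n < M, x n = y n) : lehmerPerm x M = lehmerPerm y M := by
  induction M with
  | zero => rfl
  | succ M ih => rw [lehmerPerm, lehmerPerm, ih fun n hn => h n (by omega), h M (by omega)]

theorem lehmerPerm_succ_inv_apply (M : ℕ) : (lehmerPerm x (M + 1))⁻¹ M = (x M).val := by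
  rw [lehmerPerm, mul_inv_rev, Perm.mul_apply, Perm.inv_eq_iff_eq.2
    (lehmerPerm_apply_of_le le_rfl).symm, swap_inv, swap_apply_right]

theorem eq_of_lehmerPerm_eq {M : ℕ} (h : lehmerPerm x M = lehmerPerm y M) :
    ∀ n < M, x n = y n := by
  induction M with
  | zero => intro n hn; omega
  | succ M ih =>
    have hM : x M = y M := ZMod.val_injective _ <| by
      rw [← lehmerPerm_succ_inv_apply, ← lehmerPerm_succ_inv_apply, h]
    intro n hn
    rcases Nat.lt_succ_iff_lt_or_eq.1 hn with hn | rfl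
    · refine ih ?_ n hn
      simpa [lehmerPerm, hM] using h
    · exact hM

theorem exists_lehmerPerm_eq {M : ℕ} {σ : Perm ℕ} (hσ : ∀ k, M ≤ k → σ k = k) :
    ∃ y, (∀ n, M ≤ n → y n = x n) ∧ lehmerPerm y M = σ := by
  induction M generalizing σ with
  | zero => exact ⟨x, fun _ _ => rfl, Perm.ext fun k => (hσ k k.zero_le).symm⟩
  | succ M ih =>
    have hσM : σ⁻¹ M ≤ M := by
      by_contra! h
      have := hσ _ h
      simp only [Perm.coe_inv, apply_symm_apply] at this h
      omega
    obtain ⟨y, hy, hyσ⟩ := ih (σ := σ * swap (σ⁻¹ M) M) fun k hk => by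
      rcases hk.eq_or_lt with rfl | hk
      · simp
      · rw [Perm.mul_apply, swap_apply_of_ne_of_ne (by omega) (by omega), hσ k hk]
    refine ⟨Function.update y M (σ⁻¹ M : ℕ), fun n hn => ?_, ?_⟩
    · rw [Function.update_of_ne (by omega), hy n (by omega)]
    · rw [lehmerPerm, lehmerPerm_congr fun n hn => Function.update_of_ne hn.ne _ _,
        Function.update_self, ZMod.val_cast_of_lt (by omega), hyσ, mul_assoc, swap_mul_self,
        mul_one]

theorem lehmerPerm_eq_mul_of_le {σ : Perm ℕ} {M N : ℕ} (h : lehmerPerm y M = σ * lehmerPerm x M)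
    (htail : ∀ n, M ≤ n → y n = x n) (hMN : M ≤ N) : lehmerPerm y N = σ * lehmerPerm x N := by
  induction N, hMN using Nat.le_induction with
  | base => exact h
  | succ N hMN ih => rw [lehmerPerm, lehmerPerm, ih, htail N hMN, mul_assoc]

theorem eq_of_lehmerPerm_eq_of_forall_ge {M : ℕ} (h : lehmerPerm x M = lehmerPerm y M)
    (htail : ∀ n, M ≤ n → x n = y n) : x = y :=
  funext fun n => if hn : n < M then eq_of_lehmerPerm_eq h n hn else htail n (not_lt.1 hn)

theorem exists_lehmerPerm_eq_mul (g : finitaryPerm) (x : Π n : ℕ, ZMod (n + 1)) :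
    ∃ y : Π n : ℕ, ZMod (n + 1), (∀ n, finitaryBound g ≤ n → y n = x n) ∧
      lehmerPerm y (finitaryBound g) = g * lehmerPerm x (finitaryBound g) :=
  exists_lehmerPerm_eq fun k hk => by
    rw [Perm.mul_apply, lehmerPerm_apply_of_le hk, apply_of_finitaryBound_le g hk]

noncomputable def lehmerSMul (g : finitaryPerm) (x : Π n : ℕ, ZMod (n + 1)) :
    Π n : ℕ, ZMod (n + 1) :=
  (exists_lehmerPerm_eq_mul g x).choose

theorem lehmerSMul_apply_of_le (g : finitaryPerm) {n : ℕ} (hn : finitaryBound g ≤ n) :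
    lehmerSMul g x n = x n :=
  (exists_lehmerPerm_eq_mul g x).choose_spec.1 n hn

theorem lehmerPerm_lehmerSMul (g : finitaryPerm) {N : ℕ} (hN : finitaryBound g ≤ N) :
    lehmerPerm (lehmerSMul g x) N = g * lehmerPerm x N :=
  lehmerPerm_eq_mul_of_le (exists_lehmerPerm_eq_mul g x).choose_spec.2
    (fun _ => lehmerSMul_apply_of_le g) hN

theorem eq_lehmerSMul {g : finitaryPerm} {N : ℕ} (hN : finitaryBound g ≤ N)
    (htail : ∀ n, N ≤ n → y n = x n) (h : lehmerPerm y N = g * lehmerPerm x N) :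
    y = lehmerSMul g x :=
  eq_of_lehmerPerm_eq_of_forall_ge (h.trans (lehmerPerm_lehmerSMul g hN).symm) fun n hn => by
    rw [htail n hn, lehmerSMul_apply_of_le g (hN.trans hn)]

theorem lehmerSMul_one (x : Π n : ℕ, ZMod (n + 1)) : lehmerSMul 1 x = x :=
  (eq_lehmerSMul le_rfl (fun _ _ => rfl) (by simp)).symm

theorem lehmerSMul_mul (g h : finitaryPerm) (x : Π n : ℕ, ZMod (n + 1)) :
    lehmerSMul (g * h) x = lehmerSMul g (lehmerSMul h x) := by
  set N := max (finitaryBound (g * h)) (max (finitaryBound g) (finitaryBound h))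
  refine (eq_lehmerSMul (N := N) (by omega) (fun n hn => ?_) ?_).symm
  · rw [lehmerSMul_apply_of_le g (by omega), lehmerSMul_apply_of_le h (by omega)]
  · rw [lehmerPerm_lehmerSMul g (by omega), lehmerPerm_lehmerSMul h (by omega), Subgroup.coe_mul,
      mul_assoc]

noncomputable def lehmerAction : finitaryPerm →* Perm (Π n : ℕ, ZMod (n + 1)) where
  toFun g :=
    { toFun := lehmerSMul g
      invFun := lehmerSMul g⁻¹
      left_inv := fun x => by rw [← lehmerSMul_mul, inv_mul_cancel, lehmerSMul_one]
      right_inv := fun x => by rw [← lehmerSMul_mul, mul_inv_cancel, lehmerSMul_one] }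
  map_one' := Perm.ext lehmerSMul_one
  map_mul' g h := Perm.ext (lehmerSMul_mul g h)

theorem lehmerAction_apply (g : finitaryPerm) (x : Π n : ℕ, ZMod (n + 1)) :
    lehmerAction g x = lehmerSMul g x :=
  rfl

theorem eq_one_of_lehmerAction_apply_eq_self {g : finitaryPerm} (h : lehmerAction g x = x) :
    g = 1 := by
  have := lehmerPerm_lehmerSMul (x := x) g le_rfl
  rw [← lehmerAction_apply, h, right_eq_mul] at this
  exact Subtype.ext this

theorem orbitOf_lehmerAction (x : Π n : ℕ, ZMod (n + 1)) :
    orbitOf lehmerAction x = {y | ∀ᶠ n in atTop, y n = x n} := by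
  ext y
  constructor
  · rintro ⟨g, rfl⟩
    exact eventually_atTop.2 ⟨finitaryBound g, fun n => lehmerSMul_apply_of_le g⟩
  · intro hy
    obtain ⟨M, hM⟩ := eventually_atTop.1 hy
    let g : finitaryPerm := ⟨lehmerPerm y M * (lehmerPerm x M)⁻¹,
      mul_mem (lehmerPerm_mem_finitaryPerm M) (inv_mem (lehmerPerm_mem_finitaryPerm M))⟩
    have hN : M ≤ max M (finitaryBound g) := le_max_left _ _
    refine ⟨g, (eq_lehmerSMul (le_max_right _ _) (fun n hn => hM n (hN.trans hn))
      (lehmerPerm_eq_mul_of_le ?_ hM hN)).symm⟩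
    simp [g]

theorem measurable_lehmerAction (g : finitaryPerm) : Measurable (lehmerAction g) := by
  refine measurable_pi_lambda _ fun n => DependsOn.measurable
    (Set.finite_Iio (max (finitaryBound g) (n + 1))) fun x x' hxx' => ?_
  have hM : lehmerPerm x (finitaryBound g) = lehmerPerm x' (finitaryBound g) :=
    lehmerPerm_congr fun k hk => hxx' k (by simp; omega)
  by_cases hn : n < finitaryBound g
  · refine eq_of_lehmerPerm_eq ?_ n hn
    rw [lehmerAction_apply, lehmerAction_apply, lehmerPerm_lehmerSMul g le_rfl,
      lehmerPerm_lehmerSMul g le_rfl, hM]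
  · rw [lehmerAction_apply, lehmerAction_apply, lehmerSMul_apply_of_le g (not_lt.1 hn),
      lehmerSMul_apply_of_le g (not_lt.1 hn), hxx' n (by simp)]

end Lehmer

instance {α : Type*} [Countable α] : Countable (Multiplicative α) :=
  Countable.of_equiv α Multiplicative.ofAdd

instance : Infinite (Π₀ n : ℕ, ZMod (n + 1)) := by
  refine Infinite.of_injective (fun n => DFinsupp.single (n + 1) (1 : ZMod (n + 2))) fun m n h => ?_
  have hm := DFunLike.congr_fun h (m + 1)
  by_contra hmn
  have : Fact (1 < m + 2) := ⟨by omega⟩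
  simp [DFinsupp.single_apply, Ne.symm hmn] at hm

/-- Being ICC is not an orbit equivalence invariant: there are orbit equivalent
countably infinite groups, one ICC and one abelian (hence not ICC). -/
theorem icc_not_orbitEquivalence_invariant :
    ∃ (Γ : Type) (Λ : Type) (gΓ : Group Γ) (gΛ : Group Λ),
      Countable Γ ∧ Infinite Γ ∧ Countable Λ ∧ Infinite Λ ∧
      @IsICCGroup Γ gΓ ∧ @IsAbelianGroup Λ gΛ ∧ ¬ @IsICCGroup Λ gΛ ∧
      @AreOrbitEquivalent Γ Λ gΓ gΛ := by
  have hΛ : IsAbelianGroup (Multiplicative (Π₀ n : ℕ, ZMod (n + 1))) := mul_comm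
  set μ := Measure.infinitePi fun n => uniformOn (Set.univ : Set (ZMod (n + 1)))
  have htranslation_pmp := isPMPAction_translationAction (E := fun n => ZMod (n + 1)) μ
  have htranslation_free : IsFreeAction μ (translationAction _) :=
    isFreeAction_of_forall_apply_eq_self fun _ _ => eq_one_of_translationAction_apply_eq_self
  have horbit x : orbitOf lehmerAction x = orbitOf (translationAction _) x :=
    (orbitOf_lehmerAction x).trans (orbitOf_translationAction x).symm
  refine ⟨finitaryPerm, Multiplicative (Π₀ n : ℕ, ZMod (n + 1)), inferInstance, inferInstance,
    inferInstance, IsICCGroup.infinite isICCGroup_finitaryPerm, inferInstance, inferInstance,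
    isICCGroup_finitaryPerm, hΛ, IsAbelianGroup.not_isICCGroup hΛ, Π n : ℕ, ZMod (n + 1),
    inferInstance, μ, inferInstance, inferInstance, lehmerAction, translationAction _, fun g => ?_,
    isFreeAction_of_forall_apply_eq_self fun _ _ => eq_one_of_lehmerAction_apply_eq_self,
    isErgodicAction_infinitePi _ _ orbitOf_lehmerAction, htranslation_pmp, htranslation_free,
    isErgodicAction_infinitePi _ _ orbitOf_translationAction, ae_of_all _ horbit⟩
  exact measurePreserving_of_mem_orbitOf htranslation_pmp htranslation_free _
    (fun x => horbit x ▸ ⟨g, rfl⟩)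
    fun s => measurableSet_eq_fun (measurable_lehmerAction g) (htranslation_pmp s).measurable
end
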